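/- arXiv:2404.13186 — 4 statements merged into one kernel-verified Lean document; each statement's English description precedes it below -/
import Mathlib

section
/- Let H be a 2-dimensional complex Hilbert space. Then there exists a subset C of H such that for any two nonzero orthogonal vectors v, w in H, exactly one of v and w lies in C. -/
/-!
Orthogonal complementation is a fixed-point-free involution on the subspaces of a nontrivial
finite-dimensional inner product space, so (by well-ordering the subspaces and keeping the smaller
member of each pair `{K, Kᗮ}`) one can choose exactly one subspace from every pair. In dimension 2
the complement of the line through `v ≠ 0` is the line through any nonzero `w ⊥ v`, so `C`, the set
of vectors whose line was chosen, works.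
-/

open scoped InnerProductSpace

theorem Function.Involutive.exists_set_xor_mem {α : Type*} {σ : α → α}
    (hσ : Function.Involutive σ) (hfix : ∀ a, σ a ≠ a) :
    ∃ S : Set α, ∀ a, Xor (a ∈ S) (σ a ∈ S) := by
  let r : α → α → Prop := WellOrderingRel
  refine ⟨{a | r a (σ a)}, fun a => ?_⟩
  simp only [Set.mem_ofPred_eq, hσ a]
  rcases trichotomous_of r a (σ a) with h | h | h
  · exact Or.inl ⟨h, asymm h⟩
  · exact absurd h.symm (hfix a)
  · exact Or.inr ⟨h, asymm h⟩

namespace Submodule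

variable {𝕜 E : Type*} [RCLike 𝕜] [NormedAddCommGroup E] [InnerProductSpace 𝕜 E]

theorem orthogonal_involutive [FiniteDimensional 𝕜 E] :
    Function.Involutive (fun K : Submodule 𝕜 E => Kᗮ) :=
  fun K => K.orthogonal_orthogonal

theorem orthogonal_ne_self [Nontrivial E] (K : Submodule 𝕜 E) : Kᗮ ≠ K := by
  intro h
  have hK : K = ⊥ := by simpa [h] using K.inf_orthogonal_eq_bot
  exact top_ne_bot (by rw [← bot_orthogonal_eq_top (𝕜 := 𝕜) (E := E), ← hK, h])

theorem orthogonal_span_singleton_eq_span_singleton (hdim : Module.finrank 𝕜 E = 2)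
    {v w : E} (hv : v ≠ 0) (hw : w ≠ 0) (hvw : ⟪v, w⟫_𝕜 = 0) :
    (𝕜 ∙ v)ᗮ = 𝕜 ∙ w := by
  have : Fact (Module.finrank 𝕜 E = 1 + 1) := ⟨hdim⟩
  have : FiniteDimensional 𝕜 E := .of_finrank_eq_succ hdim
  refine (eq_of_le_of_finrank_eq ?_ ?_).symm
  · rwa [span_singleton_le_iff_mem, mem_orthogonal_singleton_iff_inner_right]
  · rw [finrank_span_singleton hw, finrank_orthogonal_span_singleton (n := 1) hv]

end Submodule

theorem stmt_0 (H : Type*) [NormedAddCommGroup H] [InnerProductSpace ℂ H]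
    (hdim : Module.finrank ℂ H = 2) :
    ∃ C : Set H, ∀ v w : H, v ≠ 0 → w ≠ 0 → ⟪v, w⟫_ℂ = 0 →
      Xor' (v ∈ C) (w ∈ C) := by
  have : FiniteDimensional ℂ H := .of_finrank_eq_succ hdim
  have : Nontrivial H := Module.nontrivial_of_finrank_eq_succ hdim
  obtain ⟨S, hS⟩ := Submodule.orthogonal_involutive.exists_set_xor_mem
    (Submodule.orthogonal_ne_self (𝕜 := ℂ) (E := H))
  refine ⟨{v | ℂ ∙ v ∈ S}, fun v w hv hw hvw => ?_⟩
  have hline := hS (ℂ ∙ v)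
  rw [Submodule.orthogonal_span_singleton_eq_span_singleton hdim hv hw hvw] at hline
  exact hline
end

section
/- Let p_1, …, p_ℓ be orthogonal projections on a finite-dimensional complex Hilbert space H. Then id_H − (p_1 + ⋯ + p_ℓ) is positive semidefinite if and only if p_i ∘ p_j = 0 for all i ≠ j. -/
/-!
For a symmetric projection `p` one has `re ⟪p x, x⟫ = ‖p x‖²`, so the quadratic form of
`1 - ∑ pᵢ` is `‖x‖² - ∑ ‖pᵢ x‖²`. If the `pᵢ` are pairwise orthogonal, their sum is again a
symmetric projection, hence so is `1 - ∑ pᵢ`, which is therefore positive. Conversely, evaluating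
the form at `x = pⱼ y` gives `0 ≤ ‖x‖² - ‖pⱼ x‖² - ‖pᵢ x‖² = -‖pᵢ x‖²` for `i ≠ j`, so `pᵢ pⱼ = 0`.
-/

open scoped InnerProductSpace

namespace LinearMap

variable {𝕜 E : Type*} [RCLike 𝕜] [NormedAddCommGroup E] [InnerProductSpace 𝕜 E]

theorem IsSymmetricProjection.re_inner_apply_self {p : E →ₗ[𝕜] E}
    (hp : p.IsSymmetricProjection) (x : E) : RCLike.re ⟪p x, x⟫_𝕜 = ‖p x‖ ^ 2 := by
  conv_lhs => rw [← hp.isIdempotentElem]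
  rw [Module.End.mul_apply, hp.isSymmetric]
  exact inner_self_eq_norm_sq _

variable {ι : Type*} [Fintype ι] {p : ι → E →ₗ[𝕜] E}

theorem re_inner_one_sub_sum_apply_self (hp : ∀ i, (p i).IsSymmetricProjection) (x : E) :
    RCLike.re ⟪(1 - ∑ i, p i) x, x⟫_𝕜 = ‖x‖ ^ 2 - ∑ i, ‖p i x‖ ^ 2 := by
  simp only [sub_apply, Module.End.one_apply, sum_apply, inner_sub_left, sum_inner, map_sub,
    map_sum, inner_self_eq_norm_sq, (hp _).re_inner_apply_self]

theorem orthogonalIdempotents_of_re_inner_one_sub_sum_nonneg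
    (hp : ∀ i, (p i).IsSymmetricProjection)
    (hpos : ∀ x, 0 ≤ RCLike.re ⟪(1 - ∑ i, p i) x, x⟫_𝕜) : OrthogonalIdempotents p := by
  classical
  refine ⟨fun i ↦ (hp i).isIdempotentElem, fun i j hij ↦ ?_⟩
  ext y
  set x := p j y
  have hjx : p j x = x := congr($((hp j).isIdempotentElem.eq) y)
  have hpair : ‖p i x‖ ^ 2 + ‖p j x‖ ^ 2 ≤ ∑ k, ‖p k x‖ ^ 2 := by
    rw [← Finset.sum_pair (f := fun k ↦ ‖p k x‖ ^ 2) hij]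
    exact Finset.sum_le_univ_sum_of_nonneg fun _ ↦ sq_nonneg _
  have hform := hpos x
  rw [re_inner_one_sub_sum_apply_self hp] at hform
  rw [hjx] at hpair
  have hix : ‖p i x‖ ^ 2 = 0 := le_antisymm (by linarith) (sq_nonneg _)
  simpa using hix

theorem _root_.OrthogonalIdempotents.isSymmetricProjection_one_sub_sum
    (hp : OrthogonalIdempotents p) (hsym : ∀ i, (p i).IsSymmetric) :
    (1 - ∑ i, p i).IsSymmetricProjection :=
  ⟨hp.isIdempotentElem_sum.one_sub,
    IsSymmetric.one.sub (isSymmetric_sum _ fun i _ ↦ hsym i)⟩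

theorem isPositive_one_sub_sum_iff (hp : ∀ i, (p i).IsSymmetricProjection) :
    (1 - ∑ i, p i).IsPositive ↔ OrthogonalIdempotents p :=
  ⟨fun hpos ↦ orthogonalIdempotents_of_re_inner_one_sub_sum_nonneg hp hpos.re_inner_nonneg_left,
    fun horth ↦ (horth.isSymmetricProjection_one_sub_sum fun i ↦ (hp i).isSymmetric).isPositive⟩

end LinearMap

theorem stmt_7_general (H : Type*) [NormedAddCommGroup H] [InnerProductSpace ℂ H]
    (ℓ : ℕ) (p : Fin ℓ → (H →ₗ[ℂ] H))
    (hp : ∀ i, p i ∘ₗ p i = p i) (hps : ∀ i, (p i).IsSymmetric) :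
    (∀ h : H, 0 ≤ (⟪((LinearMap.id : H →ₗ[ℂ] H) - ∑ i, p i) h, h⟫_ℂ).re) ↔
      (∀ i j, i ≠ j → p i ∘ₗ p j = 0) := by
  have hproj : ∀ i, (p i).IsSymmetricProjection := fun i ↦ ⟨hp i, hps i⟩
  have hsym : (1 - ∑ i, p i).IsSymmetric :=
    LinearMap.IsSymmetric.one.sub (LinearMap.isSymmetric_sum _ fun i _ ↦ hps i)
  calc (∀ h : H, 0 ≤ (⟪((LinearMap.id : H →ₗ[ℂ] H) - ∑ i, p i) h, h⟫_ℂ).re)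
      ↔ (1 - ∑ i, p i).IsPositive := (and_iff_right hsym).symm
    _ ↔ OrthogonalIdempotents p := LinearMap.isPositive_one_sub_sum_iff hproj
    _ ↔ (∀ i j, i ≠ j → p i ∘ₗ p j = 0) :=
      ⟨fun h ↦ h.ortho, fun h ↦ ⟨fun i ↦ hp i, h⟩⟩

theorem stmt_7 (H : Type*) [NormedAddCommGroup H] [InnerProductSpace ℂ H]
    [FiniteDimensional ℂ H] (ℓ : ℕ) (p : Fin ℓ → (H →ₗ[ℂ] H))
    (hp : ∀ i, p i ∘ₗ p i = p i) (hps : ∀ i, (p i).IsSymmetric) :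
    (∀ h : H, 0 ≤ (⟪((LinearMap.id : H →ₗ[ℂ] H) - ∑ i, p i) h, h⟫_ℂ).re) ↔
      (∀ i j, i ≠ j → p i ∘ₗ p j = 0) :=
  stmt_7_general H ℓ p hp hps
end

section
/- Let H be a finite-dimensional complex Hilbert space and let m be a positive semidefinite linear operator on H with tr(m) = 1 such that tr(m ∘ P_v) ∈ {0,1} for every one-dimensional subspace v of H, where P_v is the orthogonal projection onto v. Then m is the orthogonal projection onto a one-dimensional subspace (i.e., m has eigenvalue 1 with multiplicity 1 and eigenvalue 0 otherwise). -/
/-!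
Diagonalise `m` in an orthonormal eigenbasis `b`. Testing the hypothesis on the line spanned by
`b i` gives `tr (m ∘ P) = ⟪b i, m (b i)⟫ = μ i`, so every eigenvalue is `0` or `1`; since they sum to
`tr m = 1`, exactly one of them is `1`, and `m` is the projection onto that eigenvector.
-/

open scoped InnerProductSpace

section
variable {𝕜 E : Type*} [RCLike 𝕜] [NormedAddCommGroup E] [InnerProductSpace 𝕜 E]

theorem LinearMap.trace_comp_starProjection_unit_singleton [FiniteDimensional 𝕜 E]
    (T : E →ₗ[𝕜] E) {u : E} (hu : ‖u‖ = 1) :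
    LinearMap.trace 𝕜 E (T ∘ₗ (𝕜 ∙ u).starProjection.toLinearMap) = ⟪u, T u⟫_𝕜 := by
  have : T ∘ₗ (𝕜 ∙ u).starProjection.toLinearMap = (innerₛₗ 𝕜 u).smulRight (T u) := by
    ext x
    simp [Submodule.starProjection_unit_singleton 𝕜 hu]
  rw [this, LinearMap.trace_smulRight]
  rfl

theorem LinearMap.IsSymmetric.eigenvalues_eq_inner [FiniteDimensional 𝕜 E] {T : E →ₗ[𝕜] E}
    (hT : T.IsSymmetric) {n : ℕ} (hn : Module.finrank 𝕜 E = n) (i : Fin n) :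
    (hT.eigenvalues hn i : 𝕜) = ⟪hT.eigenvectorBasis hn i, T (hT.eigenvectorBasis hn i)⟫_𝕜 := by
  rw [hT.apply_eigenvectorBasis, inner_smul_right, OrthonormalBasis.inner_eq_one, mul_one]

theorem LinearMap.IsSymmetric.eq_starProjection_of_eigenvalues_eq_single [FiniteDimensional 𝕜 E]
    {T : E →ₗ[𝕜] E} (hT : T.IsSymmetric) {n : ℕ} (hn : Module.finrank 𝕜 E = n) {i : Fin n}
    (hi : hT.eigenvalues hn = Pi.single i 1) :
    T = (𝕜 ∙ hT.eigenvectorBasis hn i).starProjection.toLinearMap := by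
  classical
  let b := hT.eigenvectorBasis hn
  refine b.toBasis.ext fun j => ?_
  rw [b.coe_toBasis, hT.apply_eigenvectorBasis, hi, ContinuousLinearMap.coe_coe,
    Submodule.starProjection_unit_singleton 𝕜 (b.orthonormal.1 i), b.inner_eq_ite]
  rcases eq_or_ne j i with rfl | hji
  · simp [b]
  · simp [hji, hji.symm]
end

theorem exists_eq_pi_single_of_sum_eq_one {ι R : Type*} [Fintype ι] [DecidableEq ι]
    [Ring R] [PartialOrder R] [IsOrderedRing R] [Nontrivial R] {μ : ι → R}
    (h01 : ∀ i, μ i = 0 ∨ μ i = 1) (hsum : ∑ i, μ i = 1) : ∃ i, μ = Pi.single i 1 := by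
  have hnonneg : ∀ i, 0 ≤ μ i := fun i => (h01 i).elim (·.ge) (fun h => h ▸ zero_le_one)
  obtain ⟨i, -, hi⟩ := Finset.exists_ne_zero_of_sum_ne_zero (hsum ▸ one_ne_zero : ∑ i, μ i ≠ 0)
  have hi1 : μ i = 1 := (h01 i).resolve_left hi
  have hrest : ∑ j ∈ Finset.univ.erase i, μ j = 0 := by
    rw [← Finset.add_sum_erase _ _ (Finset.mem_univ i), hi1] at hsum
    exact add_eq_left.mp hsum
  refine ⟨i, funext fun j => ?_⟩
  rcases eq_or_ne j i with rfl | hji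
  · simpa using hi1
  · rw [Pi.single_eq_of_ne hji]
    exact (Finset.sum_eq_zero_iff_of_nonneg (fun k _ => hnonneg k)).mp hrest j
      (Finset.mem_erase.mpr ⟨hji, Finset.mem_univ j⟩)

theorem stmt_14_general (H : Type*) [NormedAddCommGroup H] [InnerProductSpace ℂ H]
    [FiniteDimensional ℂ H] (m : H →ₗ[ℂ] H)
    (hsym : m.IsSymmetric)
    (htr : LinearMap.trace ℂ H m = 1)
    (h01 : ∀ v : Submodule ℂ H, Module.finrank ℂ v = 1 →
      LinearMap.trace ℂ H
        (m ∘ₗ (v.subtype ∘ₗ (v.orthogonalProjection).toLinearMap)) ∈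
          ({0, 1} : Set ℂ)) :
    ∃ v : Submodule ℂ H, Module.finrank ℂ v = 1 ∧
      m = v.subtype ∘ₗ (v.orthogonalProjection).toLinearMap := by
  have h01 : ∀ v : Submodule ℂ H, Module.finrank ℂ v = 1 →
      LinearMap.trace ℂ H (m ∘ₗ v.starProjection.toLinearMap) ∈ ({0, 1} : Set ℂ) := h01
  let b := hsym.eigenvectorBasis rfl
  have hb : ∀ i, ‖b i‖ = 1 := b.orthonormal.1
  have hspan : ∀ i, Module.finrank ℂ (ℂ ∙ b i) = 1 := fun i =>
    finrank_span_singleton (b.orthonormal.ne_zero i)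
  have heig01 : ∀ i, hsym.eigenvalues rfl i = 0 ∨ hsym.eigenvalues rfl i = 1 := by
    intro i
    have := h01 _ (hspan i)
    rw [m.trace_comp_starProjection_unit_singleton (hb i), ← hsym.eigenvalues_eq_inner] at this
    rwa [Set.mem_insert_iff, Set.mem_singleton_iff, RCLike.ofReal_eq_zero, ← RCLike.ofReal_one,
      RCLike.ofReal_inj] at this
  have hsum : ∑ i, hsym.eigenvalues rfl i = 1 := by
    rw [← hsym.re_trace_eq_sum_eigenvalues, htr, RCLike.one_re]
  obtain ⟨i, hi⟩ := exists_eq_pi_single_of_sum_eq_one heig01 hsum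
  exact ⟨ℂ ∙ b i, hspan i, hsym.eq_starProjection_of_eigenvalues_eq_single rfl hi⟩

theorem stmt_14 (H : Type*) [NormedAddCommGroup H] [InnerProductSpace ℂ H]
    [FiniteDimensional ℂ H] (m : H →ₗ[ℂ] H)
    (hsym : m.IsSymmetric) (hpos : ∀ h : H, 0 ≤ (⟪m h, h⟫_ℂ).re)
    (htr : LinearMap.trace ℂ H m = 1)
    (h01 : ∀ v : Submodule ℂ H, Module.finrank ℂ v = 1 →
      LinearMap.trace ℂ H
        (m ∘ₗ (v.subtype ∘ₗ (v.orthogonalProjection).toLinearMap)) ∈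
          ({0, 1} : Set ℂ)) :
    ∃ v : Submodule ℂ H, Module.finrank ℂ v = 1 ∧
      m = v.subtype ∘ₗ (v.orthogonalProjection).toLinearMap :=
  stmt_14_general H m hsym htr h01
end

section
/- There is no function μ from the set of linear subspaces of a complex Hilbert space H of dimension at least 3 to {0,1} such that μ(H) = 1 and for every finite collection of pairwise orthogonal subspaces v_1, …, v_ℓ, μ(v_1 + ⋯ + v_ℓ) = μ(v_1) + ⋯ + μ(v_ℓ), assuming Gleason's theorem: every finitely additive measure on subspaces of H has the form v ↦ tr(m ∘ P_v) for some positive semidefinite operator m. -/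
open scoped InnerProductSpace

/-!
By Gleason's theorem a {0,1}-valued measure is `v ↦ re tr(m P_v)`, so on lines it is
`ℂ ∙ x ↦ re ⟪x, m x⟫`, a continuous function of the unit vector `x`. The unit sphere is connected
and the function takes only the values 0 and 1, so all lines get the same value `c`. Additivity
over the lines of an orthonormal basis then gives `1 = μ ⊤ = (dim H) c`, impossible for `dim H ≥ 2`.
-/

section

open InnerProductSpace Metric Module

theorem LinearMap.trace_comp_projection_span_singleton {𝕜 E : Type*} [RCLike 𝕜]
    [NormedAddCommGroup E] [InnerProductSpace 𝕜 E] [FiniteDimensional 𝕜 E]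
    (m : E →ₗ[𝕜] E) {x : E} (hx : ‖x‖ = 1) :
    trace 𝕜 E (m ∘ₗ ((𝕜 ∙ x).subtype ∘ₗ (𝕜 ∙ x).orthogonalProjectionOnto.toLinearMap))
      = ⟪x, m x⟫_𝕜 := by
  have hrankOne : m ∘ₗ ((𝕜 ∙ x).subtype ∘ₗ (𝕜 ∙ x).orthogonalProjectionOnto.toLinearMap) =
      (rankOne 𝕜 (m x) x).toLinearMap := by
    ext y
    simp [Submodule.starProjection_unit_singleton 𝕜 hx]
  rw [hrankOne, trace_rankOne]

theorem Complex.isConnected_sphere {E : Type*} [NormedAddCommGroup E] [NormedSpace ℂ E]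
    [Nontrivial E] (x : E) {r : ℝ} (hr : 0 ≤ r) : IsConnected (sphere x r) := by
  refine _root_.isConnected_sphere ?_ x hr
  rw [rank_real_of_complex]
  calc (1 : Cardinal) < 2 := Cardinal.one_lt_two
    _ ≤ 2 * Module.rank ℂ E := le_mul_of_one_le_right zero_le (Cardinal.one_le_iff_pos.2 rank_pos)

theorem OrthonormalBasis.iSup_span_singleton {ι 𝕜 E : Type*} [Fintype ι] [RCLike 𝕜]
    [NormedAddCommGroup E] [InnerProductSpace 𝕜 E] (b : OrthonormalBasis ι 𝕜 E) :
    ⨆ i, 𝕜 ∙ b i = ⊤ := by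
  rw [← Submodule.span_range_eq_iSup, ← b.coe_toBasis, b.toBasis.span_eq]

theorem Orthonormal.inner_eq_zero_of_mem_span_singleton {ι 𝕜 E : Type*} [RCLike 𝕜]
    [NormedAddCommGroup E] [InnerProductSpace 𝕜 E] {v : ι → E} (hv : Orthonormal 𝕜 v)
    {i j : ι} (hij : i ≠ j) {x y : E} (hx : x ∈ 𝕜 ∙ v i) (hy : y ∈ 𝕜 ∙ v j) :
    ⟪x, y⟫_𝕜 = 0 :=
  (Submodule.isOrtho_span.2 (by simpa using hv.2 hij)).inner_eq hx hy

variable {H : Type*} [NormedAddCommGroup H] [InnerProductSpace ℂ H] [FiniteDimensional ℂ H]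

theorem apply_span_singleton_eq_of_zero_one_of_trace {μ : Submodule ℂ H → ℝ}
    (h01 : ∀ v, μ v = 0 ∨ μ v = 1) {m : H →ₗ[ℂ] H}
    (hm : ∀ v : Submodule ℂ H,
      μ v = (LinearMap.trace ℂ H (m ∘ₗ (v.subtype ∘ₗ v.orthogonalProjectionOnto.toLinearMap))).re)
    {x y : H} (hx : ‖x‖ = 1) (hy : ‖y‖ = 1) : μ (ℂ ∙ x) = μ (ℂ ∙ y) := by
  have : Nontrivial H := ⟨⟨x, 0, norm_ne_zero_iff.1 (by rw [hx]; exact one_ne_zero)⟩⟩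
  have hline : ∀ z : H, ‖z‖ = 1 → μ (ℂ ∙ z) = (⟪z, m z⟫_ℂ).re := fun z hz => by
    rw [hm, m.trace_comp_projection_span_singleton hz]
  have hcont : Continuous fun z : H => (⟪z, m z⟫_ℂ).re :=
    Complex.continuous_re.comp (continuous_id.inner m.continuous_of_finiteDimensional)
  have hmaps : Set.MapsTo (fun z : H => (⟪z, m z⟫_ℂ).re) (sphere 0 1) {0, 1} := fun z hz => by
    rw [mem_sphere_zero_iff_norm] at hz
    simpa [← hline z hz] using h01 (ℂ ∙ z)
  rw [hline x hx, hline y hy]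
  exact (Complex.isConnected_sphere (0 : H) zero_le_one).isPreconnected.constant_of_mapsTo
    (Set.toFinite _).isDiscrete hcont.continuousOn hmaps (by simpa using hx) (by simpa using hy)

end

theorem stmt_15 (H : Type*) [NormedAddCommGroup H] [InnerProductSpace ℂ H]
    [FiniteDimensional ℂ H] (hdim : 3 ≤ Module.finrank ℂ H)
    (gleason : ∀ μ : Submodule ℂ H → ℝ, (∀ v, 0 ≤ μ v) →
      (∀ (ℓ : ℕ) (v : Fin ℓ → Submodule ℂ H),
        (∀ i j, i ≠ j → ∀ x ∈ v i, ∀ y ∈ v j, ⟪x, y⟫_ℂ = 0) →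
        μ (⨆ i, v i) = ∑ i, μ (v i)) →
      ∃ m : H →ₗ[ℂ] H, m.IsSymmetric ∧ (∀ h : H, 0 ≤ (⟪m h, h⟫_ℂ).re) ∧
        ∀ v : Submodule ℂ H,
          μ v = (LinearMap.trace ℂ H
            (m ∘ₗ (v.subtype ∘ₗ (v.orthogonalProjectionOnto).toLinearMap))).re) :
    ¬ ∃ μ : Submodule ℂ H → ℝ,
      (∀ v, μ v = 0 ∨ μ v = 1) ∧ μ ⊤ = 1 ∧
      (∀ (ℓ : ℕ) (v : Fin ℓ → Submodule ℂ H),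
        (∀ i j, i ≠ j → ∀ x ∈ v i, ∀ y ∈ v j, ⟪x, y⟫_ℂ = 0) →
        μ (⨆ i, v i) = ∑ i, μ (v i)) := by
  rintro ⟨μ, h01, htop, hadd⟩
  obtain ⟨m, -, -, hm⟩ :=
    gleason μ (fun v => (h01 v).elim (·.ge) fun h => h ▸ zero_le_one) hadd
  let b := stdOrthonormalBasis ℂ H
  let i₀ : Fin (Module.finrank ℂ H) := ⟨0, by omega⟩
  have hsum : μ ⊤ = Module.finrank ℂ H * μ (ℂ ∙ b i₀) := by
    rw [← b.iSup_span_singleton, hadd _ _ fun i j hij _ hx _ hy =>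
      b.orthonormal.inner_eq_zero_of_mem_span_singleton hij hx hy]
    simp only [apply_span_singleton_eq_of_zero_one_of_trace h01 hm (b.orthonormal.1 _) (b.orthonormal.1 i₀),
      Finset.sum_const, Finset.card_univ, Fintype.card_fin, nsmul_eq_mul]
  have hdim' : (3 : ℝ) ≤ Module.finrank ℂ H := by exact_mod_cast hdim
  rcases h01 (ℂ ∙ b i₀) with h | h <;> rw [htop, h] at hsum <;> linarith
end
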